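/- arXiv:1702.05209 — 4 statements merged into one kernel-verified Lean document; each statement's English description precedes it below -/
import Mathlib

section
/- For a probability distribution {p_j} on the nonnegative integers with mean ∑ j·p_j ≤ 1, the Shannon entropy is at most 2 bits. -/
lemma gibbs_pointwise (p q : ℝ) (hp : 0 ≤ p) (hq : 0 < q) :
    p * Real.log q ≤ p * Real.log p + q - p := by
  rcases eq_or_lt_of_le hp with h | h
  · simp [← h, hq.le]
  · have hlog : Real.log (q / p) ≤ q / p - 1 :=
      Real.log_le_sub_one_of_pos (div_pos hq h)
    have := mul_le_mul_of_nonneg_left hlog h.le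
    rw [Real.log_div hq.ne' h.ne'] at this
    have hqp : p * (q / p - 1) = q - p := by field_simp
    nlinarith

/-- A probability distribution on ℕ with mean at most 1 has Shannon entropy
(base 2) at most 2 bits. -/
theorem entropy_le_two_of_mean_le_one (p : ℕ → ℝ)
    (hnonneg : ∀ j, 0 ≤ p j) (hsum : Summable p) (htot : ∑' j, p j = 1)
    (hmean_sum : Summable (fun j : ℕ => (j : ℝ) * p j))
    (hmean : ∑' (j : ℕ), (j : ℝ) * p j ≤ 1)
    (hent_sum : Summable (fun j => p j * Real.logb 2 (p j))) :
    -∑' j, p j * Real.logb 2 (p j) ≤ 2 := by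
  have hlog2 : (0:ℝ) < Real.log 2 := Real.log_pos one_lt_two
  set q : ℕ → ℝ := fun j => (1/2:ℝ)^(j+1) with hq_def
  have hq_pos : ∀ j, 0 < q j := fun j => by positivity
  have hgeo : Summable (fun j : ℕ => (1/2:ℝ)^j) :=
    summable_geometric_of_lt_one (by norm_num) (by norm_num)
  have hq_sum : Summable q := by
    have := hgeo.mul_right (1/2)
    exact this.congr fun j => by simp [hq_def, pow_succ]
  have hq_tot : ∑' j, q j = 1 := by
    have h1 : ∑' j : ℕ, (1/2:ℝ)^j = 2 := by
      rw [tsum_geometric_of_lt_one (by norm_num) (by norm_num)]; norm_num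
    have h2 : ∑' j, q j = (∑' j : ℕ, (1/2:ℝ)^j) * (1/2) := by
      rw [← tsum_mul_right]; exact tsum_congr fun j => by simp [hq_def, pow_succ]
    rw [h2, h1]; norm_num
  -- f and g
  set f : ℕ → ℝ := fun j => p j * Real.log (p j) with hf_def
  set g : ℕ → ℝ := fun j => p j * Real.log (q j) with hg_def
  have hf_sum : Summable f := by
    have := hent_sum.mul_right (Real.log 2)
    exact this.congr fun j => by
      simp only [hf_def, Real.logb]
      field_simp
  have hg_eq : ∀ j, g j = -((j:ℝ) * p j + p j) * Real.log 2 := by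
    intro j
    have : Real.log (q j) = -(((j:ℝ)+1) * Real.log 2) := by
      rw [hq_def]
      simp only []
      rw [Real.log_pow]
      rw [show (1/2:ℝ) = 2⁻¹ by norm_num, Real.log_inv]
      push_cast; ring
    rw [hg_def]; simp only []; rw [this]; ring
  have hg_sum : Summable g := by
    have := ((hmean_sum.add hsum).mul_right (Real.log 2)).neg
    exact this.congr fun j => by rw [hg_eq j]; ring
  -- Gibbs: tsum g ≤ tsum f
  have hgibbs : ∑' j, g j ≤ ∑' j, f j := by
    have hptwise : ∀ j, g j ≤ f j + q j - p j := fun j =>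
      gibbs_pointwise (p j) (q j) (hnonneg j) (hq_pos j)
    have hrhs_sum : Summable (fun j => f j + q j - p j) := (hf_sum.add hq_sum).sub hsum
    have := Summable.tsum_le_tsum hptwise hg_sum hrhs_sum
    calc ∑' j, g j ≤ ∑' j, (f j + q j - p j) := this
      _ = ∑' j, f j + ∑' j, q j - ∑' j, p j := by
          rw [Summable.tsum_sub (hf_sum.add hq_sum) hsum, Summable.tsum_add hf_sum hq_sum]
      _ = ∑' j, f j := by rw [hq_tot, htot]; ring
  -- compute tsum g
  have htsum_g : ∑' j, g j = -((∑' j : ℕ, (j:ℝ) * p j) + 1) * Real.log 2 := by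
    calc ∑' j, g j = ∑' j : ℕ, -(((j:ℝ) * p j + p j) * Real.log 2) := by
          exact tsum_congr fun j => by rw [hg_eq j]; ring
      _ = -((∑' j : ℕ, ((j:ℝ) * p j + p j)) * Real.log 2) := by
          rw [← tsum_mul_right, tsum_neg]
      _ = -((∑' j : ℕ, (j:ℝ) * p j + ∑' j, p j) * Real.log 2) := by
          rw [Summable.tsum_add hmean_sum hsum]
      _ = _ := by rw [htot]; ring
  have hbound : -(∑' j, f j) ≤ 2 * Real.log 2 := by
    have h1 : -(∑' j, f j) ≤ -(∑' j, g j) := by linarith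
    rw [htsum_g] at h1
    nlinarith
  -- relate f to logb
  have hrel : ∑' j, f j = (∑' j, p j * Real.logb 2 (p j)) * Real.log 2 := by
    rw [← tsum_mul_right]
    exact tsum_congr fun j => by
      simp [hf_def, Real.logb]
      field_simp
  rw [hrel] at hbound
  rw [show (2:ℝ) * Real.log 2 = 2 * Real.log 2 by ring] at hbound
  nlinarith
end

section
/- For M_A = M_B and n_S odd, ∑_{n_A=0}^{n_S} min{C(M_A + n_A - 1, n_A), C(M_A + (n_S - n_A) - 1, n_S - n_A)} = 2·C(M_A + (n_S-1)/2, (n_S-1)/2). -/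
/-!
The summand `C(M_A + k - 1, k)` is the multiset count `multichoose M_A k`, which is monotone in `k`
when `M_A ≥ 1`. For `n_S = 2m + 1` the minimum is therefore attained at the index `≤ m`, so the sum
counts each of `multichoose M_A 0, …, multichoose M_A m` twice, and the hockey-stick identity sums
these to `C(M_A + m, m)`.
-/

open Finset

theorem Monotone.sum_range_min_reflect {M : Type*} [AddCommMonoid M] [LinearOrder M]
    {f : ℕ → M} (hf : Monotone f) (m : ℕ) :
    ∑ i ∈ range (2 * m + 2), min (f i) (f (2 * m + 1 - i)) = 2 • ∑ i ∈ range (m + 1), f i := by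
  have lower : ∀ i ∈ range (m + 1), min (f i) (f (2 * m + 1 - i)) = f i := fun i hi =>
    min_eq_left (hf (by rw [mem_range] at hi; omega))
  have upper : ∀ i ∈ range (m + 1),
      min (f (m + 1 + i)) (f (2 * m + 1 - (m + 1 + i))) = f (m - i) := fun i hi => by
    rw [mem_range] at hi
    rw [show 2 * m + 1 - (m + 1 + i) = m - i by omega]
    exact min_eq_right (hf (by omega))
  have reflect : ∑ i ∈ range (m + 1), f (m - i) = ∑ i ∈ range (m + 1), f i := by
    simpa using sum_range_reflect f (m + 1)
  rw [show 2 * m + 2 = (m + 1) + (m + 1) by ring, sum_range_add, sum_congr rfl lower,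
    sum_congr rfl upper, reflect, two_nsmul]

theorem Nat.monotone_multichoose {n : ℕ} (hn : n ≠ 0) : Monotone (multichoose n) := by
  obtain ⟨n, rfl⟩ := exists_eq_succ_of_ne_zero hn
  exact monotone_nat_of_le_succ fun k => (multichoose_succ_succ n k).symm ▸ le_add_self

/-- Schmidt rank bound from dimensionality, odd case: for `M_A = M_B` and `n_S`
odd, the sum of the min dimensions equals `2·C(M_A + (n_S-1)/2, (n_S-1)/2)`. -/
theorem schmidt_rank_odd (MA nS : ℕ) (hA : 1 ≤ MA) (hodd : Odd nS) :
    ∑ nA ∈ Finset.range (nS + 1),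
        min ((MA + nA - 1).choose nA) ((MA + (nS - nA) - 1).choose (nS - nA))
      = 2 * (MA + (nS - 1) / 2).choose ((nS - 1) / 2) := by
  obtain ⟨m, rfl⟩ := hodd
  simp only [← Nat.multichoose_eq]
  rw [show 2 * m + 1 + 1 = 2 * m + 2 by ring, show (2 * m + 1 - 1) / 2 = m by omega,
    (Nat.monotone_multichoose (by omega)).sum_range_min_reflect, Nat.sum_range_multichoose,
    smul_eq_mul, add_comm, Nat.choose_symm_add]
end

section
/- For M_A = M_B and n_S even, ∑_{n_A=0}^{n_S} min{C(M_A + n_A - 1, n_A), C(M_A + (n_S - n_A) - 1, n_S - n_A)} = 2·((n_S + M_A)/n_S)·C(M_A + n_S/2 - 1, n_S/2 - 1). -/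
open Finset

lemma my_sum_range_add (f : ℕ → ℕ) (a b : ℕ) :
    ∑ i ∈ range (a + b), f i = ∑ i ∈ range a, f i + ∑ i ∈ range b, f (a + i) := by
  induction b with
  | zero => simp
  | succ n ih => rw [← Nat.add_assoc, Finset.sum_range_succ, Finset.sum_range_succ, ih]; ring

lemma my_hockey (M m : ℕ) :
    ∑ k ∈ range (m + 1), (M + k - 1).choose k = (M + m).choose m := by
  induction m with
  | zero => simp
  | succ n ih =>
    rw [Finset.sum_range_succ, ih, show M + (n + 1) - 1 = M + n from by omega,
      show M + (n + 1) = (M + n) + 1 from by omega, Nat.choose_succ_succ]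

/-- Schmidt rank bound from dimensionality, even case: for `M_A = M_B` and
`n_S` even and positive, the sum of min dimensions equals
`2·((n_S + M_A)/n_S)·C(M_A + n_S/2 - 1, n_S/2 - 1)` (over ℚ). -/
theorem schmidt_rank_even (MA nS : ℕ) (hA : 1 ≤ MA) (heven : Even nS)
    (hpos : 0 < nS) :
    ((∑ nA ∈ Finset.range (nS + 1),
        min ((MA + nA - 1).choose nA) ((MA + (nS - nA) - 1).choose (nS - nA)) : ℕ) : ℚ)
      = 2 * ((nS + MA : ℚ) / nS) * ((MA + nS / 2 - 1).choose (nS / 2 - 1) : ℚ) := by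
  obtain ⟨m, hm⟩ := heven
  subst hm
  have hm1 : 1 ≤ m := by omega
  set f : ℕ → ℕ := fun k => (MA + k - 1).choose k with hf_def
  have hfe : ∀ k, f k = (MA + k - 1).choose (MA - 1) := by
    intro k
    rw [hf_def]
    dsimp only
    rw [← Nat.choose_symm (by omega : k ≤ MA + k - 1),
      show MA + k - 1 - k = MA - 1 from by omega]
  have hf : Monotone f := by
    intro a b hab
    rw [hfe, hfe]
    exact Nat.choose_le_choose _ (by omega)
  have hterm : ∀ nA, min ((MA + nA - 1).choose nA) ((MA + (m + m - nA) - 1).choose (m + m - nA))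
      = f (min nA (m + m - nA)) := by
    intro nA
    exact (hf.map_min).symm
  have hrange : ∑ k ∈ range m, f k = (MA + m - 1).choose (m - 1) := by
    have h := my_hockey MA (m - 1)
    rw [show (m - 1) + 1 = m from by omega,
      show MA + (m - 1) = MA + m - 1 from by omega] at h
    exact h
  have hsum : ∑ nA ∈ range (m + m + 1),
      min ((MA + nA - 1).choose nA) ((MA + (m + m - nA) - 1).choose (m + m - nA))
      = 2 * (MA + m - 1).choose (m - 1) + f m := by
    calc ∑ nA ∈ range (m + m + 1),
        min ((MA + nA - 1).choose nA) ((MA + (m + m - nA) - 1).choose (m + m - nA))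
        = ∑ nA ∈ range (m + m + 1), f (min nA (m + m - nA)) := by
          exact Finset.sum_congr rfl fun nA _ => hterm nA
      _ = ∑ nA ∈ range ((m + 1) + m), f (min nA (m + m - nA)) := by
          rw [show m + m + 1 = (m + 1) + m from by ring]
      _ = ∑ nA ∈ range (m + 1), f (min nA (m + m - nA))
          + ∑ i ∈ range m, f (min ((m + 1) + i) (m + m - ((m + 1) + i))) := by
          rw [my_sum_range_add]
      _ = ∑ nA ∈ range (m + 1), f nA + ∑ i ∈ range m, f (m - 1 - i) := by
          congr 1
          · exact Finset.sum_congr rfl fun nA hnA => by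
              have : nA ≤ m := by simpa [Nat.lt_succ_iff] using Finset.mem_range.mp hnA
              congr 1; omega
          · exact Finset.sum_congr rfl fun i hi => by
              have : i < m := Finset.mem_range.mp hi
              congr 1; omega
      _ = (∑ nA ∈ range m, f nA + f m) + ∑ i ∈ range m, f i := by
          rw [Finset.sum_range_succ, Finset.sum_range_reflect]
      _ = 2 * (MA + m - 1).choose (m - 1) + f m := by rw [hrange]; ring
  rw [hsum]
  have key : (MA + m - 1).choose m * m = (MA + m - 1).choose (m - 1) * MA := by
    have := Nat.choose_succ_right_eq (MA + m - 1) (m - 1)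
    rw [show (m - 1) + 1 = m from by omega, show MA + m - 1 - (m - 1) = MA from by omega] at this
    exact this
  have keyQ : ((MA + m - 1).choose m : ℚ) * m = ((MA + m - 1).choose (m - 1) : ℚ) * MA := by
    exact_mod_cast key
  rw [show (m + m) / 2 = m from by omega, hf_def]
  dsimp only
  have hmQ : (m : ℚ) ≠ 0 := by positivity
  push_cast
  field_simp
  ring_nf
  ring_nf at keyQ
  linear_combination 2 * keyQ
end

section
/- For θ = (1/2)·arccos(1/√3), the 2×2 rotation matrix by angle θ applied to a two-photon unbunched input |1,1⟩ produces a state with entanglement entropy exactly log₂ 3; concretely, the output amplitude distribution over Alice's photon number (0, 1, or 2 photons) is uniform (1/3, 1/3, 1/3). -/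
/-- For `θ = (1/2)·arccos(1/√3)`, the rotation-by-`θ` beamsplitter applied to
the two-photon unbunched input `|1,1⟩` yields output components `|2,0⟩`,
`|1,1⟩`, `|0,2⟩` with squared amplitudes each `1/3`, giving entanglement
entropy exactly `log₂ 3`. -/
theorem optimal_two_photon_beamsplitter :
    let θ := Real.arccos (1 / Real.sqrt 3) / 2
    (Real.sqrt 2 * Real.cos θ * Real.sin θ) ^ 2 = 1 / 3 ∧
    (Real.cos θ ^ 2 - Real.sin θ ^ 2) ^ 2 = 1 / 3 ∧
    (-(Real.sqrt 2) * Real.sin θ * Real.cos θ) ^ 2 = 1 / 3 ∧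
    -(3 * ((1 / 3) * Real.logb 2 (1 / 3))) = Real.logb 2 3 := by
  intro θ
  have h3 : Real.sqrt 3 > 1 := by
    nlinarith [Real.sq_sqrt (by norm_num : (3:ℝ) ≥ 0), Real.sqrt_nonneg 3]
  have h3pos : (0:ℝ) < Real.sqrt 3 := by linarith
  have hble : 1 / Real.sqrt 3 ≤ 1 := by rw [div_le_one h3pos]; linarith
  have hbge : (-1:ℝ) ≤ 1 / Real.sqrt 3 := by
    have h0 : (0:ℝ) ≤ 1 / Real.sqrt 3 := by positivity
    linarith
  have hcos : Real.cos (2 * θ) = 1 / Real.sqrt 3 := by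
    have : 2 * θ = Real.arccos (1 / Real.sqrt 3) := by ring
    rw [this, Real.cos_arccos hbge hble]
  have hpyth0 := Real.sin_sq_add_cos_sq θ
  have hdiff : Real.cos θ ^ 2 - Real.sin θ ^ 2 = 1 / Real.sqrt 3 := by
    rw [Real.cos_two_mul] at hcos
    linarith
  have hsq : (1 / Real.sqrt 3) ^ 2 = 1 / 3 := by
    rw [div_pow, Real.sq_sqrt (by norm_num : (3:ℝ) ≥ 0)]
    norm_num
  have hpyth := Real.sin_sq_add_cos_sq θ
  have h2 : Real.sqrt 2 ^ 2 = 2 := Real.sq_sqrt (by norm_num)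
  have hmid : (Real.cos θ ^ 2 - Real.sin θ ^ 2) ^ 2 = 1 / 3 := by
    rw [hdiff, hsq]
  have key : Real.cos θ ^ 2 * Real.sin θ ^ 2 = 1 / 6 := by nlinarith [hmid, hpyth]
  refine ⟨?_, hmid, ?_, ?_⟩
  · have e : (Real.sqrt 2 * Real.cos θ * Real.sin θ) ^ 2
        = 2 * (Real.cos θ ^ 2 * Real.sin θ ^ 2) := by
      rw [mul_pow, mul_pow, h2]; ring
    rw [e, key]; norm_num
  · have e : (-Real.sqrt 2 * Real.sin θ * Real.cos θ) ^ 2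
        = 2 * (Real.cos θ ^ 2 * Real.sin θ ^ 2) := by
      rw [mul_pow, mul_pow, neg_pow, h2]; ring
    rw [e, key]; norm_num
  · have : Real.logb 2 (1 / 3) = -Real.logb 2 3 := by
      rw [one_div, Real.logb_inv]
    rw [this]; ring
end
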